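/- arXiv:2603.25208 — 3 statements merged into one kernel-verified Lean document; each statement's English description precedes it below -/
import Mathlib

section
/- Let (Ω, ℱ, ℙ, σ) be a measure-preserving dynamical system, let f : Ω → ℋ be the generator of a random circle homeomorphism, and let F be its standard lift. Fix x₀ ∈ [0,1) and suppose that for ℙ-almost every ω ∈ Ω the random rotation number ρ_F(ω) = lim_{n→∞} (F^(n)_ω(x₀) − x₀)/n exists. Then for ℙ-almost every ω ∈ Ω, lim_{n→∞} B_f(n, ω, x₀) = ρ_F(ω). -/
open MeasureTheory

/-- Iterated composition of a random lift:
`iterLift σ F n ω = F_{σ^{n-1} ω} ∘ ⋯ ∘ F_{σ ω} ∘ F_ω`. -/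
def iterLift {Ω : Type*} (σ : Ω → Ω) (F : Ω → ℝ → ℝ) : ℕ → Ω → ℝ → ℝ
  | 0, _, x => x
  | n + 1, ω, x => iterLift σ F n (σ ω) (F ω x)

/-- Iterated composition of the induced interval maps `f̂_ω = Int.fract ∘ F_ω` on `[0,1)`:
`iterHat σ F n ω = f̂_{σ^{n-1} ω} ∘ ⋯ ∘ f̂_ω`. -/
noncomputable def iterHat {Ω : Type*} (σ : Ω → Ω) (F : Ω → ℝ → ℝ) : ℕ → Ω → ℝ → ℝ
  | 0, _, x => x
  | n + 1, ω, x => iterHat σ F n (σ ω) (Int.fract (F ω x))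

/-- `S_ω`, the indicator function of the right interval `J_ω`, where
`J_ω = [c_ω, 1)` if `f̂_ω(0) ≠ 0` and `J_ω = ∅` if `f̂_ω(0) = 0`, and where
`c_ω = f_ω⁻¹(0)` is described by the data `c : Ω → ℝ`. -/
noncomputable def rightInd {Ω : Type*} (F : Ω → ℝ → ℝ) (c : Ω → ℝ) (ω : Ω) : ℝ → ℝ :=
  Set.indicator (if Int.fract (F ω 0) ≠ 0 then Set.Ico (c ω) 1 else (∅ : Set ℝ)) fun _ => 1

/-- The `n`-th binary coding frequency
`B_f(n, ω, x₀) = (1/n) ∑_{k=0}^{n-1} S_{σ^k ω}(f̂^{(k)}_ω(x₀))`. -/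
noncomputable def binFreq {Ω : Type*} (σ : Ω → Ω) (F : Ω → ℝ → ℝ) (c : Ω → ℝ)
    (n : ℕ) (ω : Ω) (x₀ : ℝ) : ℝ :=
  (∑ k ∈ Finset.range n, rightInd F c (σ^[k] ω) (iterHat σ F k ω x₀)) / n

open Filter Topology

/-!
For the standard lift, `F_ω` maps `[0,1)` into `[0,2)`, and it reaches `1` exactly on `J_ω`
(where `F_ω(c_ω) = 1` unless `F_ω(0) = 0`). Hence `S_ω(t) = ⌊F_ω(t)⌋` for `t ∈ [0,1)`: the symbol
counts the integers crossed in one step. Since `F^(n)` commutes with integer translations, these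
counts add up along the orbit, `∑_{k<n} S_{σ^k ω}(f̂^(k)_ω(x₀)) = ⌊F^(n)_ω(x₀)⌋`, so `B_f(n, ω, x₀)`
differs from `(F^(n)_ω(x₀) − x₀)/n` by `O(1/n)`.
-/

section Lift

variable {Ω : Type*} {σ : Ω → Ω} {F : Ω → ℝ → ℝ}

theorem map_add_intCast_of_map_add_one {G : ℝ → ℝ} (hG : ∀ x, G (x + 1) = G x + 1)
    (m : ℤ) (x : ℝ) : G (x + m) = G x + m := by
  have hper : Function.Periodic (fun y => G y - y) 1 := fun y => by simp only [hG]; ring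
  have := hper.int_mul m x
  simp only [mul_one] at this
  linarith

theorem iterLift_add_intCast (hdeg : ∀ ω (x : ℝ), F ω (x + 1) = F ω x + 1)
    (n : ℕ) (ω : Ω) (m : ℤ) (x : ℝ) :
    iterLift σ F n ω (x + m) = iterLift σ F n ω x + m := by
  induction n generalizing ω x with
  | zero => rfl
  | succ n ih =>
    simp only [iterLift, map_add_intCast_of_map_add_one (hdeg ω), ih]

theorem iterLift_succ_eq_fract_add_floor (hdeg : ∀ ω (x : ℝ), F ω (x + 1) = F ω x + 1)
    (n : ℕ) (ω : Ω) (x : ℝ) :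
    iterLift σ F (n + 1) ω x = iterLift σ F n (σ ω) (Int.fract (F ω x)) + ⌊F ω x⌋ := by
  rw [← iterLift_add_intCast hdeg, Int.fract_add_floor]
  rfl

theorem eq_one_of_fract_eq_zero {y : ℝ} (hy : Int.fract y = 0) (h0 : 0 < y) (h2 : y < 2) :
    y = 1 := by
  obtain ⟨k, rfl⟩ := Int.fract_eq_zero_iff.mp hy
  have : 0 < k := by exact_mod_cast h0
  have : k < 2 := by exact_mod_cast h2
  rw [show k = 1 by omega, Int.cast_one]

theorem rightInd_eq_floor {c : Ω → ℝ} {ω : Ω} (hmono : StrictMono (F ω))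
    (hdeg : ∀ x, F ω (x + 1) = F ω x + 1) (hstd : F ω 0 ∈ Set.Ico (0 : ℝ) 1)
    (hc : c ω ∈ Set.Ico (0 : ℝ) 1 ∧ Int.fract (F ω (c ω)) = 0)
    {t : ℝ} (ht : t ∈ Set.Ico (0 : ℝ) 1) :
    rightInd F c ω t = ⌊F ω t⌋ := by
  set J := if Int.fract (F ω 0) ≠ 0 then Set.Ico (c ω) 1 else (∅ : Set ℝ) with hJdef
  have hF1 : F ω 1 = F ω 0 + 1 := by simpa using hdeg 0
  have hlo : 0 ≤ F ω t := hstd.1.trans (hmono.monotone ht.1)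
  have hhi : F ω t < 2 := by linarith [hmono ht.2, hstd.2]
  have hJ : t ∈ J ↔ 1 ≤ F ω t := by
    rw [hJdef, Int.fract_eq_self.mpr hstd]
    split_ifs with h0
    · have hc1 : F ω (c ω) = 1 := eq_one_of_fract_eq_zero hc.2
        ((lt_of_le_of_ne hstd.1 (Ne.symm h0)).trans_le (hmono.monotone hc.1.1))
        (by linarith [hmono hc.1.2, hstd.2])
      rw [Set.mem_Ico, and_iff_left ht.2, ← hc1, hmono.le_iff_le]
    · simp only [Set.mem_empty_iff_false, false_iff, not_le]
      linarith [hmono ht.2, not_not.mp h0]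
  by_cases hmem : t ∈ J
  · rw [rightInd, ← hJdef, Set.indicator_of_mem hmem,
      (Int.floor_eq_iff (z := 1)).mpr ⟨by exact_mod_cast hJ.mp hmem, by norm_num; linarith⟩]
    norm_num
  · rw [rightInd, ← hJdef, Set.indicator_of_notMem hmem,
      (Int.floor_eq_iff (z := 0)).mpr ⟨by exact_mod_cast hlo, by simpa using hJ.not.mp hmem⟩]
    norm_num

theorem sum_rightInd_iterHat_eq_floor_iterLift {c : Ω → ℝ} (hmono : ∀ ω, StrictMono (F ω))
    (hdeg : ∀ ω (x : ℝ), F ω (x + 1) = F ω x + 1) (hstd : ∀ ω, F ω 0 ∈ Set.Ico (0 : ℝ) 1)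
    (hc : ∀ ω, c ω ∈ Set.Ico (0 : ℝ) 1 ∧ Int.fract (F ω (c ω)) = 0)
    (n : ℕ) (ω : Ω) {x : ℝ} (hx : x ∈ Set.Ico (0 : ℝ) 1) :
    ∑ k ∈ Finset.range n, rightInd F c (σ^[k] ω) (iterHat σ F k ω x)
      = ⌊iterLift σ F n ω x⌋ := by
  induction n generalizing ω x with
  | zero => simp [iterLift, Int.floor_eq_zero_iff.mpr hx]
  | succ n ih =>
    have hfract : Int.fract (F ω x) ∈ Set.Ico (0 : ℝ) 1 :=
      ⟨Int.fract_nonneg _, Int.fract_lt_one _⟩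
    rw [Finset.sum_range_succ', iterLift_succ_eq_fract_add_floor hdeg, Int.floor_add_intCast]
    simp only [Function.iterate_succ_apply, iterHat, ih (σ ω) hfract, Function.iterate_zero_apply,
      rightInd_eq_floor (hmono ω) (hdeg ω) (hstd ω) (hc ω) hx]
    push_cast
    ring

theorem binFreq_eq_floor_iterLift_div {c : Ω → ℝ} (hmono : ∀ ω, StrictMono (F ω))
    (hdeg : ∀ ω (x : ℝ), F ω (x + 1) = F ω x + 1) (hstd : ∀ ω, F ω 0 ∈ Set.Ico (0 : ℝ) 1)
    (hc : ∀ ω, c ω ∈ Set.Ico (0 : ℝ) 1 ∧ Int.fract (F ω (c ω)) = 0)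
    (n : ℕ) (ω : Ω) {x : ℝ} (hx : x ∈ Set.Ico (0 : ℝ) 1) :
    binFreq σ F c n ω x = ⌊iterLift σ F n ω x⌋ / n := by
  rw [binFreq, sum_rightInd_iterHat_eq_floor_iterLift hmono hdeg hstd hc n ω hx]

end Lift

theorem tendsto_sub_div_of_tendsto_sub_div {u : ℕ → ℝ} {a ρ : ℝ}
    (h : Tendsto (fun n : ℕ => (u n - a) / n) atTop (𝓝 ρ)) (b : ℝ) :
    Tendsto (fun n : ℕ => (u n - b) / n) atTop (𝓝 ρ) := by
  have := h.add (tendsto_const_div_atTop_nhds_zero_nat (a - b))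
  rw [add_zero] at this
  exact this.congr fun n => by rw [← add_div, sub_add_sub_cancel]

theorem tendsto_floor_div_of_tendsto_sub_div {u : ℕ → ℝ} {a ρ : ℝ}
    (h : Tendsto (fun n : ℕ => (u n - a) / n) atTop (𝓝 ρ)) :
    Tendsto (fun n : ℕ => (⌊u n⌋ : ℝ) / n) atTop (𝓝 ρ) := by
  refine tendsto_of_tendsto_of_tendsto_of_le_of_le (tendsto_sub_div_of_tendsto_sub_div h 1)
    ((tendsto_sub_div_of_tendsto_sub_div h 0).congr fun n => by rw [sub_zero]) (fun n => ?_)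
    (fun n => ?_)
  · exact div_le_div_of_nonneg_right (Int.sub_one_lt_floor _).le n.cast_nonneg
  · exact div_le_div_of_nonneg_right (Int.floor_le _) n.cast_nonneg

theorem binary_coding_limit_general
    {Ω : Type*} [MeasurableSpace Ω] (ℙ : Measure Ω) (σ : Ω → Ω) (F : Ω → ℝ → ℝ)
    (hmono : ∀ ω, StrictMono (F ω))
    (hdeg : ∀ ω (x : ℝ), F ω (x + 1) = F ω x + 1)
    (hstd : ∀ ω, F ω 0 ∈ Set.Ico (0 : ℝ) 1)
    (c : Ω → ℝ)
    (hc : ∀ ω, c ω ∈ Set.Ico (0 : ℝ) 1 ∧ Int.fract (F ω (c ω)) = 0)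
    (x₀ : ℝ) (hx₀ : x₀ ∈ Set.Ico (0 : ℝ) 1)
    (ρ : Ω → ℝ)
    (hρ : ∀ᵐ ω ∂ℙ, Tendsto (fun n : ℕ => (iterLift σ F n ω x₀ - x₀) / n)
      atTop (𝓝 (ρ ω))) :
    ∀ᵐ ω ∂ℙ, Tendsto (fun n : ℕ => binFreq σ F c n ω x₀) atTop (𝓝 (ρ ω)) := by
  filter_upwards [hρ] with ω hω
  simp only [binFreq_eq_floor_iterLift_div hmono hdeg hstd hc _ ω hx₀]
  exact tendsto_floor_div_of_tendsto_sub_div hω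

/-- if `F` is the standard lift of the generator `f` of a random circle
homeomorphism over a measure-preserving system, `x₀ ∈ [0,1)`, and for ℙ-almost every `ω`
the random rotation number `ρ_F(ω) = lim_n (F^{(n)}_ω(x₀) − x₀)/n` exists, then for
ℙ-almost every `ω`, `lim_n B_f(n, ω, x₀) = ρ_F(ω)`. -/
theorem binary_coding_limit
    {Ω : Type*} [MeasurableSpace Ω] (ℙ : Measure Ω) [IsProbabilityMeasure ℙ]
    (σ : Ω → Ω) (hσ : MeasurePreserving σ ℙ ℙ)
    (F : Ω → ℝ → ℝ) (hmeas : Measurable (Function.uncurry F))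
    (hmono : ∀ ω, StrictMono (F ω)) (hcont : ∀ ω, Continuous (F ω))
    (hsurj : ∀ ω, Function.Surjective (F ω))
    (hdeg : ∀ ω (x : ℝ), F ω (x + 1) = F ω x + 1)
    (hstd : ∀ ω, F ω 0 ∈ Set.Ico (0 : ℝ) 1)
    (c : Ω → ℝ)
    (hc : ∀ ω, c ω ∈ Set.Ico (0 : ℝ) 1 ∧ Int.fract (F ω (c ω)) = 0)
    (x₀ : ℝ) (hx₀ : x₀ ∈ Set.Ico (0 : ℝ) 1)
    (ρ : Ω → ℝ)
    (hρ : ∀ᵐ ω ∂ℙ, Tendsto (fun n : ℕ => (iterLift σ F n ω x₀ - x₀) / n)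
      atTop (𝓝 (ρ ω))) :
    ∀ᵐ ω ∂ℙ, Tendsto (fun n : ℕ => binFreq σ F c n ω x₀) atTop (𝓝 (ρ ω)) :=
  binary_coding_limit_general ℙ σ F hmono hdeg hstd c hc x₀ hx₀ ρ hρ
end

section
/- Let (Ω, ℱ, ℙ, σ) be a measure-preserving dynamical system and let f : Ω → ℋ be the generator of a random circle homeomorphism. Then for every x₀ ∈ [0,1), every ω ∈ Ω and every n ≥ 1, the visit frequency with reference point 0 equals the binary coding frequency: V_f(n, ω, x₀, 0) = B_f(n, ω, x₀). -/
open MeasureTheory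

/-- Membership of `x` in the positively oriented circular arc `[z, y)`, with all points
represented in `[0,1)`; `[z, z) = ∅`. -/
def inArc (z y x : ℝ) : Prop :=
  if z ≤ y then z ≤ x ∧ x < y else (z ≤ x ∨ x < y)

open Classical in
/-- The `n`-th visit frequency
`V_f(n, ω, x₀, z) = (1/n) #{1 ≤ i ≤ n : f^{(i)}_ω(x₀) ∈ [z, f_{σ^{i-1}ω}(z))}`,
with circle points represented in `[0,1)` and `f_ω = Int.fract ∘ F_ω` on `[0,1)`. -/
noncomputable def visitFreq {Ω : Type*} (σ : Ω → Ω) (F : Ω → ℝ → ℝ)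
    (n : ℕ) (ω : Ω) (x₀ z : ℝ) : ℝ :=
  (((Finset.Icc 1 n).filter fun i =>
      inArc z (Int.fract (F (σ^[i - 1] ω) z)) (iterHat σ F i ω x₀)).card : ℝ) / n

/-! For `x ∈ [0,1)` and a lift with `F 0 ∈ [0,1)`, `F x` lies in `[F 0, F 0 + 1)`, so
`f̂(x) = fract (F x)` falls into the arc `[0, f̂(0))` exactly when `F x` has wrapped past `1`.
The integer `F c` is `⌈F 0⌉`, which is `1` when `F 0 ≠ 0` and `0` otherwise; hence `F x ≥ 1`
iff `F 0 ≠ 0` and `x ≥ c`, i.e. iff `x ∈ J`. So the visit at time `k + 1` is counted exactly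
when `S` is `1` at time `k`, and both frequencies are the same sum. -/

open Set Finset

theorem Int.fract_lt_iff_one_le {R : Type*} [Ring R] [LinearOrder R] [FloorRing R]
    [IsOrderedRing R] {a y : R} (ha : 0 ≤ a) (hay : a ≤ y) (hya : y < a + 1) :
    Int.fract y < a ↔ 1 ≤ y := by
  constructor
  · intro h
    by_contra! hy
    rw [Int.fract_eq_self.2 ⟨ha.trans hay, hy⟩] at h
    exact h.not_ge hay
  · intro hy
    have hfloor : (1 : R) ≤ ⌊y⌋ := by exact_mod_cast Int.floor_pos.2 hy
    calc Int.fract y = y - ⌊y⌋ := rfl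
      _ ≤ y - 1 := sub_le_sub_left hfloor y
      _ < a := sub_lt_iff_lt_add.2 hya

section CircleLift

variable {F : ℝ → ℝ} (hF : StrictMono F) (h0 : F 0 ∈ Ico (0 : ℝ) 1) (h1 : F 1 = F 0 + 1)
  {c : ℝ} (hc : c ∈ Ico (0 : ℝ) 1) (hFc : Int.fract (F c) = 0)
include hF h0 h1 hc hFc

theorem one_le_lift_iff {x : ℝ} (hx : x < 1) : 1 ≤ F x ↔ F 0 ≠ 0 ∧ c ≤ x := by
  by_cases hzero : F 0 = 0
  · simpa [hzero, h1] using hF hx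
  obtain ⟨z, hz⟩ := Int.fract_eq_zero_iff.1 hFc
  have hz_one : z = 1 := by
    have hceil : ⌈F 0⌉ = z := Int.ceil_eq_iff.2
      ⟨by rw [hz]; linarith [hF hc.2], by rw [hz]; exact hF.monotone hc.1⟩
    rw [← hceil, Int.ceil_eq_iff]
    exact ⟨by norm_num; exact lt_of_le_of_ne h0.1 (Ne.symm hzero), by norm_num; exact h0.2.le⟩
  have hFc_one : F c = 1 := by rw [← hz, hz_one, Int.cast_one]
  rw [← hFc_one, hF.le_iff_le]
  simp [hzero]

theorem fract_lift_lt_fract_lift_zero_iff {x : ℝ} (hx : x ∈ Ico (0 : ℝ) 1) :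
    Int.fract (F x) < Int.fract (F 0) ↔ Int.fract (F 0) ≠ 0 ∧ x ∈ Ico c 1 := by
  have hlow : F 0 ≤ F x := hF.monotone hx.1
  have hhigh : F x < F 0 + 1 := h1 ▸ hF hx.2
  rw [Int.fract_eq_self.2 h0, Int.fract_lt_iff_one_le h0.1 hlow hhigh,
    one_le_lift_iff hF h0 h1 hc hFc hx.2]
  simp [hx.2]

end CircleLift

section Iterates

variable {Ω : Type*} (σ : Ω → Ω) (F : Ω → ℝ → ℝ)

theorem iterHat_succ_apply' (k : ℕ) (ω : Ω) (x : ℝ) :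
    iterHat σ F (k + 1) ω x = Int.fract (F (σ^[k] ω) (iterHat σ F k ω x)) := by
  induction k generalizing ω x with
  | zero => rfl
  | succ k ih => exact ih (σ ω) _

theorem iterHat_mem_Ico {x : ℝ} (hx : x ∈ Ico (0 : ℝ) 1) :
    ∀ (k : ℕ) (ω : Ω), iterHat σ F k ω x ∈ Ico (0 : ℝ) 1
  | 0, _ => hx
  | k + 1, ω => by
    rw [iterHat_succ_apply']
    exact ⟨Int.fract_nonneg _, Int.fract_lt_one _⟩

end Iterates

theorem inArc_zero_iff {y x : ℝ} (hy : 0 ≤ y) (hx : 0 ≤ x) : inArc 0 y x ↔ x < y := by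
  rw [inArc, if_pos hy, and_iff_right hx]

open Classical in
theorem rightInd_eq_ite_inArc {Ω : Type*} {F : Ω → ℝ → ℝ} {c : Ω → ℝ} {ω : Ω}
    (hF : StrictMono (F ω)) (h0 : F ω 0 ∈ Ico (0 : ℝ) 1) (h1 : F ω 1 = F ω 0 + 1)
    (hc : c ω ∈ Ico (0 : ℝ) 1) (hFc : Int.fract (F ω (c ω)) = 0)
    {x : ℝ} (hx : x ∈ Ico (0 : ℝ) 1) :
    rightInd F c ω x = if inArc 0 (Int.fract (F ω 0)) (Int.fract (F ω x)) then 1 else 0 := by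
  have hvisit := (inArc_zero_iff (Int.fract_nonneg _) (Int.fract_nonneg _)).trans
    (fract_lift_lt_fract_lift_zero_iff hF h0 h1 hc hFc hx)
  simp only [rightInd, Set.indicator_apply, hvisit]
  split_ifs <;> simp_all

theorem card_filter_Icc_one_eq_sum_range (p : ℕ → Prop) [DecidablePred p] (n : ℕ) :
    (#{i ∈ Icc 1 n | p i} : ℝ) = ∑ k ∈ range n, if p (k + 1) then 1 else 0 := by
  rw [← sum_boole, ← Finset.Ico_add_one_right_eq_Icc, sum_Ico_eq_sum_range, Nat.add_sub_cancel]
  simp only [add_comm 1]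

theorem visit_eq_binary_general
    {Ω : Type*}
    (σ : Ω → Ω)
    (F : Ω → ℝ → ℝ)
    (hmono : ∀ ω, StrictMono (F ω))
    (hdeg : ∀ ω (x : ℝ), F ω (x + 1) = F ω x + 1)
    (hstd : ∀ ω, F ω 0 ∈ Set.Ico (0 : ℝ) 1)
    (c : Ω → ℝ)
    (hc : ∀ ω, c ω ∈ Set.Ico (0 : ℝ) 1 ∧ Int.fract (F ω (c ω)) = 0) :
    ∀ x₀ ∈ Set.Ico (0 : ℝ) 1, ∀ (ω : Ω) (n : ℕ), 1 ≤ n →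
      visitFreq σ F n ω x₀ 0 = binFreq σ F c n ω x₀ := by
  intro x₀ hx₀ ω n _
  rw [visitFreq, binFreq, card_filter_Icc_one_eq_sum_range]
  congr 1
  refine Finset.sum_congr rfl fun k _ => ?_
  have h1 : F (σ^[k] ω) 1 = F (σ^[k] ω) 0 + 1 := by simpa using hdeg (σ^[k] ω) 0
  rw [Nat.add_sub_cancel, iterHat_succ_apply', rightInd_eq_ite_inArc (hmono _) (hstd _) h1
    (hc _).1 (hc _).2 (iterHat_mem_Ico σ F hx₀ k ω)]

/-- for a random circle homeomorphism over a measure-preserving system,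
the visit frequency with reference point `0` equals the binary coding frequency:
`V_f(n, ω, x₀, 0) = B_f(n, ω, x₀)` for every `x₀ ∈ [0,1)`, every `ω` and every `n ≥ 1`. -/
theorem visit_eq_binary
    {Ω : Type*} [MeasurableSpace Ω] (ℙ : Measure Ω) [IsProbabilityMeasure ℙ]
    (σ : Ω → Ω) (hσ : MeasurePreserving σ ℙ ℙ)
    (F : Ω → ℝ → ℝ) (hmeas : Measurable (Function.uncurry F))
    (hmono : ∀ ω, StrictMono (F ω)) (hcont : ∀ ω, Continuous (F ω))
    (hsurj : ∀ ω, Function.Surjective (F ω))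
    (hdeg : ∀ ω (x : ℝ), F ω (x + 1) = F ω x + 1)
    (hstd : ∀ ω, F ω 0 ∈ Set.Ico (0 : ℝ) 1)
    (c : Ω → ℝ)
    (hc : ∀ ω, c ω ∈ Set.Ico (0 : ℝ) 1 ∧ Int.fract (F ω (c ω)) = 0) :
    ∀ x₀ ∈ Set.Ico (0 : ℝ) 1, ∀ (ω : Ω) (n : ℕ), 1 ≤ n →
      visitFreq σ F n ω x₀ 0 = binFreq σ F c n ω x₀ :=
  visit_eq_binary_general σ F hmono hdeg hstd c hc
end

section
/- Let (Ω, ℱ, ℙ, σ) be a measure-preserving dynamical system and let F be an integrable lift of a random circle homeomorphism, i.e. ∫_Ω sup_{x∈ℝ} |F_ω(x) − x| dℙ(ω) < ∞. Define R_n = ∫_Ω F^(n)_ω(0) dℙ(ω) for n ≥ 1. Then for all n, m ≥ 1, |R_{n+m} − R_n − R_m| ≤ 1. -/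
/-! Each `F_ω` is a degree-one lift, and so is every iterate `F^(n)_ω`. For two such lifts `f, g`
one has `|f (g 0) - f 0 - g 0| < 1`; applied to `f = F^(m)_{σⁿω}` and `g = F^(n)_ω` this bounds
`F^(n+m)_ω(0) - F^(n)_ω(0) - F^(m)_{σⁿω}(0)` pointwise by `1`. Integrating, and using that `σⁿ`
preserves `ℙ` to replace `∫ F^(m)_{σⁿω}(0)` by `R_m`, gives the claim. Integrability of
`F^(n)_ω(0)` follows by induction, each step moving by at most `sup_x |F_{σⁿω}(x) - x|`. -/

open MeasureTheory

open Function

namespace CircleDeg1Lift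

def ofMonotone (f : ℝ → ℝ) (hf : Monotone f) (hf₁ : ∀ x, f (x + 1) = f x + 1) :
    CircleDeg1Lift :=
  ⟨⟨f, hf⟩, hf₁⟩

@[simp]
theorem coe_ofMonotone (f : ℝ → ℝ) (hf : Monotone f) (hf₁ : ∀ x, f (x + 1) = f x + 1) :
    ⇑(ofMonotone f hf hf₁) = f :=
  rfl

theorem abs_map_sub_sub_map_zero_le (f : CircleDeg1Lift) (x : ℝ) : |f x - x - f 0| ≤ 1 := by
  have hlow := f.le_map_of_map_zero x
  have hupp := f.map_le_of_map_zero x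
  have := Int.lt_floor_add_one x
  have := Int.le_ceil x
  have := Int.ceil_lt_add_one x
  have := Int.floor_le x
  rw [abs_le]
  constructor <;> linarith

theorem bddAbove_range_abs_map_sub (f : CircleDeg1Lift) :
    BddAbove (Set.range fun x => |f x - x|) := by
  refine ⟨|f 0| + 1, ?_⟩
  rintro _ ⟨x, rfl⟩
  have := f.abs_map_sub_sub_map_zero_le x
  have := abs_sub_abs_le_abs_sub (f x - x) (f 0)
  dsimp only
  linarith

end CircleDeg1Lift

section iterLift

variable {Ω : Type*} (σ : Ω → Ω) (F : Ω → ℝ → ℝ)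

theorem iterLift_add :
    ∀ (n m : ℕ) (ω : Ω) (x : ℝ),
      iterLift σ F (n + m) ω x = iterLift σ F m (σ^[n] ω) (iterLift σ F n ω x)
  | 0, m, ω, x => by simp [iterLift]
  | n + 1, m, ω, x => by
    rw [Nat.add_right_comm]
    exact iterLift_add n m (σ ω) (F ω x)

theorem iterLift_succ' (n : ℕ) (ω : Ω) (x : ℝ) :
    iterLift σ F (n + 1) ω x = F (σ^[n] ω) (iterLift σ F n ω x) :=
  iterLift_add σ F n 1 ω x

variable {σ F}

theorem monotone_iterLift (hF : ∀ ω, Monotone (F ω)) :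
    ∀ (n : ℕ) (ω : Ω), Monotone (iterLift σ F n ω)
  | 0, _ => monotone_id
  | n + 1, ω => (monotone_iterLift hF n (σ ω)).comp (hF ω)

theorem iterLift_add_one (hF : ∀ ω x, F ω (x + 1) = F ω x + 1) :
    ∀ (n : ℕ) (ω : Ω) (x : ℝ), iterLift σ F n ω (x + 1) = iterLift σ F n ω x + 1
  | 0, _, _ => rfl
  | n + 1, ω, x => by
    simp only [iterLift, hF, iterLift_add_one hF n (σ ω)]

theorem abs_iterLift_add_sub_sub_lt_one (hF : ∀ ω, Monotone (F ω))
    (hF₁ : ∀ ω x, F ω (x + 1) = F ω x + 1) (n m : ℕ) (ω : Ω) :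
    |iterLift σ F (n + m) ω 0 - iterLift σ F n ω 0 - iterLift σ F m (σ^[n] ω) 0| < 1 := by
  let lift k ω' := CircleDeg1Lift.ofMonotone (iterLift σ F k ω')
    (monotone_iterLift hF k ω') (iterLift_add_one hF₁ k ω')
  have h := (lift m (σ^[n] ω)).dist_map_map_zero_lt (lift n ω)
  rw [Real.dist_eq, abs_sub_comm] at h
  simpa only [lift, CircleDeg1Lift.coe_ofMonotone, iterLift_add, sub_add_eq_sub_sub_swap] using h

theorem measurable_uncurry_iterLift [MeasurableSpace Ω] (hσ : Measurable σ)
    (hF : Measurable (uncurry F)) : ∀ n : ℕ, Measurable (uncurry (iterLift σ F n))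
  | 0 => measurable_snd
  | n + 1 =>
    (measurable_uncurry_iterLift hσ hF n).comp ((hσ.comp measurable_fst).prodMk hF)

theorem measurable_iterLift_apply [MeasurableSpace Ω] (hσ : Measurable σ)
    (hF : Measurable (uncurry F)) (n : ℕ) (x : ℝ) : Measurable fun ω => iterLift σ F n ω x :=
  (measurable_uncurry_iterLift hσ hF n).comp (measurable_id.prodMk measurable_const)

end iterLift

theorem MeasureTheory.MeasurePreserving.integral_comp_of_aestronglyMeasurable
    {α β E : Type*} [MeasurableSpace α] [MeasurableSpace β] [NormedAddCommGroup E]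
    [NormedSpace ℝ E] {μ : Measure α} {ν : Measure β} {f : α → β}
    (hf : MeasurePreserving f μ ν) {g : β → E} (hg : AEStronglyMeasurable g ν) :
    ∫ x, g (f x) ∂μ = ∫ y, g y ∂ν := by
  rw [← hf.map_eq] at hg ⊢
  exact (integral_map hf.measurable.aemeasurable hg).symm

section Integrability

variable {Ω : Type*} [MeasurableSpace Ω] {μ : Measure Ω} {σ : Ω → Ω} {F : Ω → ℝ → ℝ}

theorem integrable_iterLift_zero (hσ : MeasurePreserving σ μ μ) (hFmeas : Measurable (uncurry F))
    (hF : ∀ ω, Monotone (F ω)) (hF₁ : ∀ ω x, F ω (x + 1) = F ω x + 1)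
    (hint : Integrable (fun ω => ⨆ x : ℝ, |F ω x - x|) μ) :
    ∀ n : ℕ, Integrable (fun ω => iterLift σ F n ω 0) μ
  | 0 => integrable_zero _ _ _
  | n + 1 => by
    have hmeas k := measurable_iterLift_apply hσ.measurable hFmeas k 0
    have hstep : Integrable (fun ω => iterLift σ F (n + 1) ω 0 - iterLift σ F n ω 0) μ := by
      refine ((hσ.iterate n).integrable_comp_of_integrable hint).mono'
        ((hmeas (n + 1)).sub (hmeas n)).aestronglyMeasurable (ae_of_all _ fun ω => ?_)
      rw [iterLift_succ', Real.norm_eq_abs]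
      exact le_ciSup (CircleDeg1Lift.ofMonotone _ (hF _) (hF₁ _)).bddAbove_range_abs_map_sub _
    simpa only [Pi.add_def, add_sub_cancel] using
      (integrable_iterLift_zero hσ hFmeas hF hF₁ hint n).add hstep

end Integrability

theorem Rn_quasi_additive_general
    {Ω : Type*} [MeasurableSpace Ω] (ℙ : Measure Ω) [IsProbabilityMeasure ℙ]
    (σ : Ω → Ω) (hσ : MeasurePreserving σ ℙ ℙ)
    (F : Ω → ℝ → ℝ) (hmeas : Measurable (Function.uncurry F))
    (hmono : ∀ ω, StrictMono (F ω))
    (hdeg : ∀ ω (x : ℝ), F ω (x + 1) = F ω x + 1)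
    (hint : Integrable (fun ω => ⨆ x : ℝ, |F ω x - x|) ℙ) :
    ∀ n m : ℕ, 1 ≤ n → 1 ≤ m →
      |(∫ ω, iterLift σ F (n + m) ω 0 ∂ℙ) - (∫ ω, iterLift σ F n ω 0 ∂ℙ)
        - (∫ ω, iterLift σ F m ω 0 ∂ℙ)| ≤ 1 := by
  intro n m _ _
  have hF : ∀ ω, Monotone (F ω) := fun ω => (hmono ω).monotone
  have hI := integrable_iterLift_zero hσ hmeas hF hdeg hint
  have hI_shift : Integrable (fun ω => iterLift σ F m (σ^[n] ω) 0) ℙ :=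
    (hσ.iterate n).integrable_comp_of_integrable (hI m)
  have hsub : ∫ ω, (iterLift σ F (n + m) ω 0 - iterLift σ F n ω 0
      - iterLift σ F m (σ^[n] ω) 0) ∂ℙ = (∫ ω, iterLift σ F (n + m) ω 0 ∂ℙ)
      - (∫ ω, iterLift σ F n ω 0 ∂ℙ) - ∫ ω, iterLift σ F m ω 0 ∂ℙ := by
    rw [integral_sub _ hI_shift, integral_sub (hI _) (hI _),
      (hσ.iterate n).integral_comp_of_aestronglyMeasurable
        (measurable_iterLift_apply hσ.measurable hmeas m 0).aestronglyMeasurable]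
    exact (hI _).sub (hI _)
  rw [← hsub]
  simpa using norm_integral_le_of_norm_le_const (μ := ℙ)
    (ae_of_all _ fun ω => (Real.norm_eq_abs _).trans_le
      (abs_iterLift_add_sub_sub_lt_one (σ := σ) hF hdeg n m ω).le)

/-- let `F` be an integrable lift of a random circle homeomorphism over a
measure-preserving system, i.e. `∫ sup_x |F_ω(x) − x| dℙ(ω) < ∞`, and set
`R_n = ∫ F^{(n)}_ω(0) dℙ(ω)`.  Then `|R_{n+m} − R_n − R_m| ≤ 1` for all `n, m ≥ 1`. -/
theorem Rn_quasi_additive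
    {Ω : Type*} [MeasurableSpace Ω] (ℙ : Measure Ω) [IsProbabilityMeasure ℙ]
    (σ : Ω → Ω) (hσ : MeasurePreserving σ ℙ ℙ)
    (F : Ω → ℝ → ℝ) (hmeas : Measurable (Function.uncurry F))
    (hmono : ∀ ω, StrictMono (F ω)) (hcont : ∀ ω, Continuous (F ω))
    (hsurj : ∀ ω, Function.Surjective (F ω))
    (hdeg : ∀ ω (x : ℝ), F ω (x + 1) = F ω x + 1)
    (hint : Integrable (fun ω => ⨆ x : ℝ, |F ω x - x|) ℙ) :
    ∀ n m : ℕ, 1 ≤ n → 1 ≤ m →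
      |(∫ ω, iterLift σ F (n + m) ω 0 ∂ℙ) - (∫ ω, iterLift σ F n ω 0 ∂ℙ)
        - (∫ ω, iterLift σ F m ω 0 ∂ℙ)| ≤ 1 :=
  Rn_quasi_additive_general ℙ σ hσ F hmeas hmono hdeg hint
end
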